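/- Let q be a prime power, let k, m be positive integers, let C ⊆ Mat(k×m, F_q) be an F_q-linear subspace, and let (A_i)_{i≥0} and (B_j)_{j≥0} be the rank distributions of C and of its dual C^⊥. Then for every integer 0 ≤ ν ≤ k, q^{mν} · Σ_{i=0}^{k−ν} A_i · [k−i choose ν]_q = |C| · Σ_{j=0}^{ν} B_j · [k−j choose ν−j]_q. -/

import Mathlib

/-!
Over `F = 𝔽_q`, `qBinom q n t` counts the `t`-dimensional subspaces of `F^n`: the q-Pascal
recursion gives `qBinom q n t * ∏_{i<t} (q^t - q^i) = ∏_{i<t} (q^n - q^i)`, and the right-hand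
side counts linearly independent `t`-families, each of which spans a `t`-dimensional subspace
that contains exactly `∏_{i<t} (q^t - q^i)` of them.

For `U ≤ F^k` let `Mat_U` be the matrices all of whose columns lie in `U` (`matIn m U`) and
`C(U) = C ∩ Mat_U`. Counting the pairs `(U, M)` with `M ∈ C(U)` gives
`∑_{dim U = d} |C(U)| = ∑_i A_i [k-i, d-i]_q`. Since `dim Mat_U = m dim U` and
`Mat_U^⊥ = Mat_{U^⊥}`, the dual of `C + Mat_U` is `C^⊥(U^⊥)`, and comparing dimensions gives
`q^{m(k - dim U)} |C(U)| = |C| |C^⊥(U^⊥)|`. Sum this over `dim U = k - ν`; as `U^⊥` then runs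
over the subspaces of dimension `ν`, and `[k-i, k-ν-i]_q = [k-i, ν]_q`, the identity follows.
-/

open Matrix BigOperators

/-- The Gaussian (q-)binomial coefficient, defined via the q-Pascal recursion. -/
def qBinom (q : ℕ) : ℕ → ℕ → ℕ
  | _, 0 => 1
  | 0, _ + 1 => 0
  | s + 1, t + 1 => qBinom q s t + q ^ (t + 1) * qBinom q s (t + 1)

variable {F : Type} [Field F]

/-- The dual of a rank-metric code with respect to the trace product. -/
def dualCode {k m : ℕ} (C : Submodule F (Matrix (Fin k) (Fin m) F)) :
    Submodule F (Matrix (Fin k) (Fin m) F) where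
  carrier := {N | ∀ M ∈ C, Matrix.trace (M * Nᵀ) = 0}
  add_mem' := by
    intro a b ha hb M hM
    rw [Set.mem_setOf_eq] at *
    rw [Matrix.transpose_add, Matrix.mul_add, Matrix.trace_add, ha M hM, hb M hM, add_zero]
  zero_mem' := by
    intro M hM
    simp
  smul_mem' := by
    intro c N hN M hM
    rw [Set.mem_setOf_eq] at *
    rw [Matrix.transpose_smul, Matrix.mul_smul, Matrix.trace_smul, hN M hM, smul_zero]

/-- Minimum rank of a code. -/
noncomputable def minrk {k m : ℕ} (C : Submodule F (Matrix (Fin k) (Fin m) F)) : ℕ :=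
  sInf {r | ∃ M ∈ C, M ≠ 0 ∧ M.rank = r}

/-- Maximum rank of a code. -/
noncomputable def maxrk {k m : ℕ} (C : Submodule F (Matrix (Fin k) (Fin m) F)) : ℕ :=
  sSup {r | ∃ M ∈ C, M.rank = r}

/-- Rank distribution of a code. -/
noncomputable def rankDist {k m : ℕ} (C : Submodule F (Matrix (Fin k) (Fin m) F)) (i : ℕ) : ℕ :=
  Nat.card {M : Matrix (Fin k) (Fin m) F // M ∈ C ∧ M.rank = i}

/-- MRD codes. -/
def IsMRD {k m : ℕ} (C : Submodule F (Matrix (Fin k) (Fin m) F)) : Prop :=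
  C = ⊥ ∨ Module.finrank F ↥C = max k m * (min k m - minrk C + 1)

/-- Optimal anticodes. -/
def IsOptimalAnticode {k m : ℕ} (C : Submodule F (Matrix (Fin k) (Fin m) F)) : Prop :=
  Module.finrank F ↥C = max k m * maxrk C

/-- The subspace of matrices whose column space is contained in `U`. -/
def matIn {k : ℕ} (m : ℕ) (U : Submodule F (Fin k → F)) :
    Submodule F (Matrix (Fin k) (Fin m) F) where
  carrier := {M | ∀ j, Mᵀ j ∈ U}
  add_mem' := by
    intro a b ha hb j
    rw [Matrix.transpose_add]
    exact U.add_mem (ha j) (hb j)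
  zero_mem' := by
    intro j
    rw [Matrix.transpose_zero]
    exact U.zero_mem
  smul_mem' := by
    intro c M hM j
    rw [Matrix.transpose_smul]
    exact U.smul_mem c (hM j)

/-- The dual of a subspace of `Fin k → K` with respect to the standard inner product. -/
def dualPi {K : Type} [Field K] {k : ℕ} (C : Submodule K (Fin k → K)) :
    Submodule K (Fin k → K) where
  carrier := {β | ∀ α ∈ C, ∑ i, α i * β i = 0}
  add_mem' := by
    intro a b ha hb α hα
    rw [Set.mem_setOf_eq] at *
    have : ∑ i, α i * (a + b) i = (∑ i, α i * a i) + ∑ i, α i * b i := by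
      rw [← Finset.sum_add_distrib]
      exact Finset.sum_congr rfl fun i _ => by simp [mul_add]
    rw [this, ha α hα, hb α hα, add_zero]
  zero_mem' := by
    intro α hα
    simp
  smul_mem' := by
    intro c β hβ α hα
    rw [Set.mem_setOf_eq] at *
    have : ∑ i, α i * (c • β) i = c * ∑ i, α i * β i := by
      rw [Finset.mul_sum]
      exact Finset.sum_congr rfl fun i _ => by simp [smul_eq_mul]; ring
    rw [this, hβ α hα, mul_zero]

/-- The matrix associated to a vector `α ∈ K^k` with respect to a basis `G` of `K` over `F`. -/
noncomputable def matOfBasis (F K : Type) [Field F] [Field K] [Algebra F K]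
    (k m : ℕ) (G : Module.Basis (Fin m) F K) :
    (Fin k → K) →ₗ[F] Matrix (Fin k) (Fin m) F where
  toFun α := Matrix.of fun i j => G.repr (α i) j
  map_add' α β := by
    ext i j
    simp
  map_smul' c α := by
    ext i j
    simp

/-- The `h`-trace of a `k × m` matrix (`k ≤ m`). -/
def hTrace {k m : ℕ} (hkm : k ≤ m) (h : ℕ) (M : Matrix (Fin k) (Fin m) F) : F :=
  ∑ i : Fin k, if (i : ℕ) < h then M i (Fin.castLE hkm i) else 0


open Module Finset

section QBinomial

@[simp]
lemma qBinom_zero_right (q n : ℕ) : qBinom q n 0 = 1 := by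
  cases n <;> rfl

lemma qBinom_eq_zero_of_lt (q : ℕ) {n t : ℕ} (h : n < t) : qBinom q n t = 0 := by
  induction n generalizing t with
  | zero => obtain ⟨t, rfl⟩ := Nat.exists_eq_succ_of_ne_zero (by omega : t ≠ 0); rfl
  | succ n ih =>
    obtain ⟨t, rfl⟩ := Nat.exists_eq_succ_of_ne_zero (by omega : t ≠ 0)
    simp only [qBinom, ih (by omega : n < t), ih (by omega : n < t + 1), mul_zero, add_zero]

lemma prod_range_succ_pow_sub_pow (q : ℤ) (a t : ℕ) :
    ∏ i ∈ range (t + 1), (q ^ (a + 1) - q ^ i) =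
      (q ^ (a + 1) - 1) * q ^ t * ∏ i ∈ range t, (q ^ a - q ^ i) := by
  rw [prod_range_succ', prod_congr rfl fun i _ => show q ^ (a + 1) - q ^ (i + 1) =
    q * (q ^ a - q ^ i) by ring, prod_mul_distrib, prod_const, card_range]
  ring

lemma qBinom_mul_prod_pow_sub_pow (q n t : ℕ) :
    (qBinom q n t : ℤ) * ∏ i ∈ range t, ((q : ℤ) ^ t - (q : ℤ) ^ i) =
      ∏ i ∈ range t, ((q : ℤ) ^ n - (q : ℤ) ^ i) := by
  induction n generalizing t with
  | zero =>
    rcases t with _ | t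
    · simp
    · rw [qBinom_eq_zero_of_lt q (Nat.succ_pos t), Nat.cast_zero, zero_mul,
        prod_range_succ', pow_zero, sub_self, mul_zero]
  | succ n ih =>
    rcases t with _ | t
    · simp
    have h := ih (t + 1)
    rw [prod_range_succ_pow_sub_pow, prod_range_succ] at h
    rw [qBinom, prod_range_succ_pow_sub_pow, prod_range_succ_pow_sub_pow, Nat.cast_add,
      Nat.cast_mul, Nat.cast_pow]
    linear_combination ((q : ℤ) ^ (t + 1) - 1) * (q : ℤ) ^ t * ih t + (q : ℤ) ^ (t + 1) * h

lemma qBinom_mul_prod_pow_sub_pow_of_le {q n t : ℕ} (hq : 1 ≤ q) (htn : t ≤ n) :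
    qBinom q n t * ∏ i : Fin t, (q ^ t - q ^ (i : ℕ)) =
      ∏ i : Fin t, (q ^ n - q ^ (i : ℕ)) := by
  have hcast : ∀ a, t ≤ a → ((∏ i : Fin t, (q ^ a - q ^ (i : ℕ)) : ℕ) : ℤ) =
      ∏ i ∈ range t, ((q : ℤ) ^ a - (q : ℤ) ^ i) := by
    intro a ha
    rw [Fin.prod_univ_eq_prod_range (fun i => q ^ a - q ^ i), Nat.cast_prod]
    refine prod_congr rfl fun i hi => ?_
    rw [Nat.cast_sub (Nat.pow_le_pow_right hq (by grind)), Nat.cast_pow, Nat.cast_pow]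
  have := qBinom_mul_prod_pow_sub_pow q n t
  rw [← hcast t le_rfl, ← hcast n htn] at this
  exact_mod_cast this

end QBinomial

noncomputable instance Submodule.fintypeOfFinite {R M : Type*} [Semiring R] [AddCommMonoid M]
    [Module R M] [Finite M] : Fintype (Submodule R M) :=
  have : Finite (Submodule R M) := Finite.of_injective _ SetLike.coe_injective
  Fintype.ofFinite _

section SubspaceCount

variable {K V : Type*} [DivisionRing K] [Fintype K] [AddCommGroup V] [Module K V] [Finite V]

local notation "q" => Fintype.card K

lemma card_linearIndependent_eq_card_submodule_mul (t : ℕ) :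
    Nat.card {s : Fin t → V // LinearIndependent K s} =
      Nat.card {W : Submodule K V // finrank K W = t} * ∏ i : Fin t, (q ^ t - q ^ (i : ℕ)) := by
  let f : {s : Fin t → V // LinearIndependent K s} → {W : Submodule K V // finrank K W = t} :=
    fun s => ⟨Submodule.span K (Set.range s.1), by
      rw [finrank_span_eq_card s.2, Fintype.card_fin]⟩
  have card_fiber (W : {W : Submodule K V // finrank K W = t}) :
      Nat.card {s // f s = W} = ∏ i : Fin t, (q ^ t - q ^ (i : ℕ)) := by
    have mem (s : {s : Fin t → V // LinearIndependent K s}) (hs : f s = W) (i : Fin t) :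
        s.1 i ∈ W.1 := hs ▸ Submodule.subset_span (Set.mem_range_self i)
    let e : {s // f s = W} ≃ {s : Fin t → W.1 // LinearIndependent K s} :=
      { toFun s := ⟨fun i => ⟨s.1.1 i, mem s.1 s.2 i⟩, .of_comp W.1.subtype s.1.2⟩
        invFun s := ⟨⟨fun i => s.1 i, s.2.map' W.1.subtype (Submodule.ker_subtype _)⟩, by
          refine Subtype.ext ?_
          change Submodule.span K (Set.range (W.1.subtype ∘ s.1)) = W.1
          rw [Set.range_comp, Submodule.span_image,
            s.2.span_eq_top_of_card_eq_finrank' (by rw [Fintype.card_fin, W.2]),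
            Submodule.map_subtype_top]⟩
        left_inv _ := rfl
        right_inv _ := rfl }
    rw [Nat.card_congr e, card_linearIndependent (W.2.ge), W.2]
  rw [← Nat.card_congr (Equiv.sigmaFiberEquiv f), Nat.card_sigma, sum_congr rfl fun W _ =>
    card_fiber W, sum_const, card_univ, smul_eq_mul, Nat.card_eq_fintype_card]

theorem card_submodule_finrank_eq (t : ℕ) :
    Nat.card {W : Submodule K V // finrank K W = t} = qBinom q (finrank K V) t := by
  rcases le_or_gt t (finrank K V) with htn | htn
  · have hq : 1 < q := Fintype.one_lt_card
    refine Nat.eq_of_mul_eq_mul_right (prod_pos (s := univ) fun (i : Fin t) _ =>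
      Nat.sub_pos_of_lt (Nat.pow_lt_pow_right hq i.2)) ?_
    rw [← card_linearIndependent_eq_card_submodule_mul, card_linearIndependent htn,
      qBinom_mul_prod_pow_sub_pow_of_le hq.le htn]
  · rw [qBinom_eq_zero_of_lt _ htn, Nat.card_eq_zero]
    exact .inl ⟨fun W => htn.not_ge (W.2 ▸ Submodule.finrank_le W.1)⟩

lemma finrank_map_mkQ_add_finrank {V₀ W : Submodule K V} (h : V₀ ≤ W) :
    finrank K (W.map V₀.mkQ) + finrank K V₀ = finrank K W := by
  have := LinearMap.finrank_range_add_finrank_ker (V₀.mkQ.domRestrict W)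
  rwa [LinearMap.range_domRestrict, LinearMap.ker_domRestrict, Submodule.ker_mkQ,
    (Submodule.comapSubtypeEquivOfLe h).finrank_eq] at this

theorem card_submodule_ge_finrank_eq (V₀ : Submodule K V) (d : ℕ) :
    Nat.card {W : Submodule K V // V₀ ≤ W ∧ finrank K W = d} =
      if finrank K V₀ ≤ d then qBinom q (finrank K V - finrank K V₀) (d - finrank K V₀)
      else 0 := by
  split_ifs with hd
  · have hmap (W : Submodule K (V ⧸ V₀)) : (W.comap V₀.mkQ).map V₀.mkQ = W :=
      Submodule.map_comap_eq_self (by rw [Submodule.range_mkQ]; exact le_top)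
    let e : {W : Submodule K V // V₀ ≤ W ∧ finrank K W = d} ≃
        {W : Submodule K (V ⧸ V₀) // finrank K W = d - finrank K V₀} :=
      { toFun W := ⟨W.1.map V₀.mkQ, by
          have := finrank_map_mkQ_add_finrank W.2.1; omega⟩
        invFun W := ⟨W.1.comap V₀.mkQ, Submodule.le_comap_mkQ V₀ _, by
          have := finrank_map_mkQ_add_finrank (Submodule.le_comap_mkQ V₀ W.1)
          rw [hmap] at this; omega⟩
        left_inv W := Subtype.ext <| by
          simp only [Submodule.comap_map_mkQ, sup_of_le_right W.2.1]
        right_inv W := Subtype.ext (hmap W.1) }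
    have : Finite (V ⧸ V₀) := Quotient.finite _
    rw [Nat.card_congr e, card_submodule_finrank_eq, ← V₀.finrank_quotient_add_finrank,
      Nat.add_sub_cancel]
  · rw [Nat.card_eq_zero]
    exact .inl ⟨fun W => hd (W.2.2 ▸ Submodule.finrank_mono W.2.1)⟩

end SubspaceCount

section Orthogonality

lemma LinearMap.BilinForm.orthogonal_involutive {F V : Type*} [Field F] [AddCommGroup V]
    [Module F V] [FiniteDimensional F V] {B : LinearMap.BilinForm F V} (hB : B.Nondegenerate)
    (hB₀ : B.IsRefl) : Function.Involutive B.orthogonal :=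
  B.orthogonal_orthogonal hB hB₀

variable (K : Type*) [Field K] {ι κ : Type*} [Fintype ι] [Fintype κ]

abbrev Matrix.dotProductForm : LinearMap.BilinForm K (ι → K) :=
  dotProductBilin K K

variable {K}

lemma Matrix.dotProductForm_isRefl : (dotProductForm K : LinearMap.BilinForm K (ι → K)).IsRefl :=
  fun x y h => by rwa [dotProductBilin_apply_apply, dotProduct_comm] at h

lemma Matrix.dotProductForm_nondegenerate :
    (dotProductForm K : LinearMap.BilinForm K (ι → K)).Nondegenerate :=
  (dotProductForm_isRefl (K := K) (ι := ι)).nondegenerate_iff_separatingLeft.mpr fun x hx =>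
    dotProduct_eq_zero x hx

variable (K)

noncomputable def Matrix.traceProduct : LinearMap.BilinForm K (Matrix ι κ K) :=
  LinearMap.mk₂ K (fun M N => (M * Nᵀ).trace)
    (fun M M' N => by rw [Matrix.add_mul, trace_add])
    (fun c M N => by rw [Matrix.smul_mul, trace_smul])
    (fun M N N' => by rw [transpose_add, Matrix.mul_add, trace_add])
    (fun c M N => by rw [transpose_smul, Matrix.mul_smul, trace_smul])

variable {K}

@[simp]
lemma Matrix.traceProduct_apply (M N : Matrix ι κ K) : traceProduct K M N = (M * Nᵀ).trace :=
  rfl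

lemma Matrix.traceProduct_isRefl :
    (traceProduct K : LinearMap.BilinForm K (Matrix ι κ K)).IsRefl := fun M N h => by
  rwa [traceProduct_apply, ← trace_transpose, transpose_mul, transpose_transpose] at h

lemma Matrix.traceProduct_nondegenerate :
    (traceProduct K : LinearMap.BilinForm K (Matrix ι κ K)).Nondegenerate := by
  classical
  refine (traceProduct_isRefl (K := K) (ι := ι) (κ := κ)).nondegenerate_iff_separatingLeft.mpr
    fun M hM => ?_
  ext i j
  simpa [transpose_single, trace_mul_single] using hM (single i j 1)

lemma Matrix.trace_mul_transpose_eq_sum_dotProduct {R : Type*} [CommSemiring R]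
    (M N : Matrix ι κ R) :
    (M * Nᵀ).trace = ∑ j, Mᵀ j ⬝ᵥ Nᵀ j := by
  rw [trace_mul_comm, trace]
  exact sum_congr rfl fun j _ => by rw [diag_apply, mul_apply', dotProduct_comm]; rfl

lemma Matrix.finrank_orthogonal_dotProductForm {n : ℕ} (U : Submodule K (Fin n → K)) :
    finrank K ((dotProductForm K).orthogonal U) = n - finrank K U := by
  rw [LinearMap.BilinForm.finrank_orthogonal dotProductForm_nondegenerate, finrank_fin_fun]

variable [Fintype K]

lemma qBinom_symm {n t : ℕ} (ht : t ≤ n) :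
    qBinom (Fintype.card K) n t = qBinom (Fintype.card K) n (n - t) := by
  rw [← finrank_fin_fun K (n := n), ← card_submodule_finrank_eq, ← card_submodule_finrank_eq,
    finrank_fin_fun]
  refine Nat.card_congr ((LinearMap.BilinForm.orthogonal_involutive
    dotProductForm_nondegenerate dotProductForm_isRefl).toPerm _ |>.subtypeEquiv fun U => ?_)
  have := (finrank_fin_fun K).symm ▸ Submodule.finrank_le U
  rw [Function.Involutive.coe_toPerm, finrank_orthogonal_dotProductForm]
  omega

end Orthogonality

lemma Finset.sum_ite_le_eq_sum_range_card_mul {α : Type*} (s : Finset α) (g : α → ℕ)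
    (f : ℕ → ℕ) (d : ℕ) :
    ∑ x ∈ s, (if g x ≤ d then f (g x) else 0) =
      ∑ i ∈ range (d + 1), #{x ∈ s | g x = i} * f i := by
  rw [← sum_filter, ← sum_fiberwise_of_maps_to' (t := range (d + 1))
    fun x hx => mem_range.2 (Nat.lt_succ_of_le (mem_filter.1 hx).2)]
  refine sum_congr rfl fun i hi => ?_
  rw [sum_const, smul_eq_mul, filter_filter]
  congr 2
  exact filter_congr fun x _ => ⟨And.right, fun h => ⟨h ▸ mem_range_succ_iff.1 hi, h⟩⟩

section Codes

variable {k m : ℕ}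

lemma dualCode_eq_orthogonal (C : Submodule F (Matrix (Fin k) (Fin m) F)) :
    dualCode C = (traceProduct F).orthogonal C :=
  rfl

lemma finrank_dualCode (C : Submodule F (Matrix (Fin k) (Fin m) F)) :
    finrank F (dualCode C) = k * m - finrank F C := by
  rw [dualCode_eq_orthogonal, LinearMap.BilinForm.finrank_orthogonal traceProduct_nondegenerate,
    finrank_matrix, finrank_self, Fintype.card_fin, Fintype.card_fin, mul_one]

lemma dualCode_sup (C D : Submodule F (Matrix (Fin k) (Fin m) F)) :
    dualCode (C ⊔ D) = dualCode C ⊓ dualCode D :=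
  le_antisymm (le_inf (fun N hN M hM => hN M (Submodule.mem_sup_left hM))
    fun N hN M hM => hN M (Submodule.mem_sup_right hM))
  fun N ⟨hC, hD⟩ M hM => by
    obtain ⟨A, hA, B, hB, rfl⟩ := Submodule.mem_sup.1 hM
    change ((A + B) * Nᵀ).trace = 0
    rw [Matrix.add_mul, trace_add, hC A hA, hD B hB, add_zero]

lemma mem_matIn_iff_span_le {U : Submodule F (Fin k → F)} {M : Matrix (Fin k) (Fin m) F} :
    M ∈ matIn m U ↔ Submodule.span F (Set.range M.col) ≤ U := by
  rw [Submodule.span_le]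
  exact Set.range_subset_iff.symm

noncomputable def matInEquivPi (U : Submodule F (Fin k → F)) :
    matIn m U ≃ₗ[F] (Fin m → U) where
  toFun M j := ⟨M.1ᵀ j, M.2 j⟩
  map_add' _ _ := rfl
  map_smul' _ _ := rfl
  invFun f := ⟨(Matrix.of fun j => (f j : Fin k → F))ᵀ, fun j => (f j).2⟩
  left_inv _ := rfl
  right_inv _ := rfl

lemma finrank_matIn (U : Submodule F (Fin k → F)) : finrank F (matIn m U) = m * finrank F U := by
  rw [(matInEquivPi U).finrank_eq, finrank_pi_fintype, sum_const, card_univ, Fintype.card_fin,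
    smul_eq_mul]

lemma dualCode_matIn (U : Submodule F (Fin k → F)) :
    dualCode (matIn m U) = matIn m ((dotProductForm F).orthogonal U) := by
  ext N
  simp only [dualCode_eq_orthogonal, LinearMap.BilinForm.mem_orthogonal_iff, traceProduct_apply,
    trace_mul_transpose_eq_sum_dotProduct]
  refine ⟨fun hN j u hu => ?_, fun hN M hM => sum_eq_zero fun j _ => hN j _ (hM j)⟩
  have hM : (Pi.single j u : Matrix (Fin m) (Fin k) F)ᵀ ∈ matIn m U := fun j' => by
    change (Pi.single j u : Fin m → Fin k → F) j' ∈ U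
    by_cases h : j' = j
    · rwa [h, Pi.single_eq_same]
    · rw [Pi.single_eq_of_ne h]
      exact U.zero_mem
  have : ∑ j', (Pi.single j u : Fin m → Fin k → F) j' ⬝ᵥ Nᵀ j' = 0 := hN _ hM
  rwa [Fintype.sum_eq_single j fun j' h => by
    rw [Pi.single_eq_of_ne h, zero_dotProduct], Pi.single_eq_same] at this

lemma finrank_inf_matIn_add (C : Submodule F (Matrix (Fin k) (Fin m) F))
    (U : Submodule F (Fin k → F)) :
    m * (k - finrank F U) + finrank F ↥(C ⊓ matIn m U) =
      finrank F C + finrank F ↥(dualCode C ⊓ matIn m ((dotProductForm F).orthogonal U)) := by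
  rw [← dualCode_matIn, ← dualCode_sup, finrank_dualCode, Nat.mul_sub]
  have hsup := Submodule.finrank_sup_add_finrank_inf_eq C (matIn m U)
  have hsup_le := Submodule.finrank_le (C ⊔ matIn m U)
  have hU := Nat.mul_le_mul_left m (Submodule.finrank_le U)
  rw [finrank_matIn] at hsup
  rw [finrank_matrix, finrank_self, Fintype.card_fin, Fintype.card_fin, mul_one] at hsup_le
  rw [finrank_fin_fun] at hU
  rw [Nat.mul_comm k m] at hsup_le ⊢
  omega

lemma pow_mul_card_inf_matIn [Fintype F] (C : Submodule F (Matrix (Fin k) (Fin m) F))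
    (U : Submodule F (Fin k → F)) :
    Fintype.card F ^ (m * (k - finrank F U)) * Nat.card ↥(C ⊓ matIn m U) =
      Nat.card C * Nat.card ↥(dualCode C ⊓ matIn m ((dotProductForm F).orthogonal U)) := by
  rw [Module.natCard_eq_pow_finrank (K := F) (V := ↥(C ⊓ matIn m U)),
    Module.natCard_eq_pow_finrank (K := F) (V := C),
    Module.natCard_eq_pow_finrank (K := F) (V := ↥(dualCode C ⊓ _)), Nat.card_eq_fintype_card,
    ← pow_add, ← pow_add, finrank_inf_matIn_add]

lemma card_submodule_mem_matIn_finrank_eq [Fintype F] (M : Matrix (Fin k) (Fin m) F) (d : ℕ) :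
    Nat.card {U : Submodule F (Fin k → F) // M ∈ matIn m U ∧ finrank F U = d} =
      if M.rank ≤ d then qBinom (Fintype.card F) (k - M.rank) (d - M.rank) else 0 := by
  simp_rw [mem_matIn_iff_span_le]
  rw [card_submodule_ge_finrank_eq, finrank_fin_fun, ← rank_eq_finrank_span_cols]

lemma sum_card_inf_matIn [Fintype F] (C : Submodule F (Matrix (Fin k) (Fin m) F)) (d : ℕ) :
    ∑ U ∈ univ.filter (fun U : Submodule F (Fin k → F) => finrank F U = d),
        Nat.card ↥(C ⊓ matIn m U) =
      ∑ i ∈ range (d + 1), rankDist C i * qBinom (Fintype.card F) (k - i) (d - i) := by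
  classical
  have hcard (U : Submodule F (Fin k → F)) : Nat.card ↥(C ⊓ matIn m U) =
      ∑ M ∈ univ.filter (· ∈ C), if M ∈ matIn m U then 1 else 0 := by
    rw [← card_filter, filter_filter, ← Fintype.card_subtype, ← Nat.card_eq_fintype_card]
    exact Nat.card_congr (Equiv.subtypeEquivRight fun M => Submodule.mem_inf)
  have hcount (M : Matrix (Fin k) (Fin m) F) :
      (∑ U ∈ univ.filter (fun U : Submodule F (Fin k → F) => finrank F U = d),
        if M ∈ matIn m U then 1 else 0) =
      Nat.card {U : Submodule F (Fin k → F) // M ∈ matIn m U ∧ finrank F U = d} := by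
    rw [← card_filter, filter_filter, Nat.card_eq_fintype_card, Fintype.card_subtype]
    simp_rw [and_comm]
  rw [sum_congr rfl fun U _ => hcard U, sum_comm, sum_congr rfl fun M _ =>
    (hcount M).trans (card_submodule_mem_matIn_finrank_eq M d),
    sum_ite_le_eq_sum_range_card_mul _ rank fun r => qBinom (Fintype.card F) (k - r) (d - r)]
  refine sum_congr rfl fun i _ => ?_
  rw [rankDist, Nat.card_eq_fintype_card, Fintype.card_subtype, filter_filter]

end Codes

theorem stmt_6_general (F : Type) [Field F] [Fintype F] (q k m : ℕ) (hq : Fintype.card F = q)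
    (C : Submodule F (Matrix (Fin k) (Fin m) F))
    (ν : ℕ) (hν : ν ≤ k) :
    q ^ (m * ν) * ∑ i ∈ Finset.range (k - ν + 1), rankDist C i * qBinom q (k - i) ν =
      Nat.card ↥C *
        ∑ j ∈ Finset.range (ν + 1), rankDist (dualCode C) j * qBinom q (k - j) (ν - j) := by
  subst hq
  have hsymm (i : ℕ) (hi : i ∈ range (k - ν + 1)) :
      qBinom (Fintype.card F) (k - i) ν = qBinom (Fintype.card F) (k - i) (k - ν - i) := by
    rw [qBinom_symm (by omega : k - ν - i ≤ k - i)]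
    have := mem_range_succ_iff.1 hi
    congr 1
    omega
  rw [sum_congr rfl fun i hi => by rw [hsymm i hi], ← sum_card_inf_matIn, ← sum_card_inf_matIn,
    mul_sum, mul_sum]
  refine sum_equiv (LinearMap.BilinForm.orthogonal_involutive dotProductForm_nondegenerate
    dotProductForm_isRefl).toPerm (fun U => ?_) fun U hU => ?_
  · have := (finrank_fin_fun F).symm ▸ Submodule.finrank_le U
    simp only [mem_filter, mem_univ, true_and, Function.Involutive.coe_toPerm,
      finrank_orthogonal_dotProductForm]
    omega
  · rw [Function.Involutive.coe_toPerm, ← pow_mul_card_inf_matIn, (mem_filter.1 hU).2,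
      Nat.sub_sub_self hν]

/-- MacWilliams identities (moments form) for Delsarte rank-metric codes. -/
theorem stmt_6 (F : Type) [Field F] [Fintype F] (q k m : ℕ) (hq : Fintype.card F = q)
    (hk : 0 < k) (hm : 0 < m) (C : Submodule F (Matrix (Fin k) (Fin m) F))
    (ν : ℕ) (hν : ν ≤ k) :
    q ^ (m * ν) * ∑ i ∈ Finset.range (k - ν + 1), rankDist C i * qBinom q (k - i) ν =
      Nat.card ↥C *
        ∑ j ∈ Finset.range (ν + 1), rankDist (dualCode C) j * qBinom q (k - j) (ν - j) :=
  stmt_6_general F q k m hq C ν hν
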